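/- arXiv:2207.04888 — 4 statements merged into one kernel-verified Lean document; each statement's English description precedes it below -/
import Mathlib

section
/- Pointwise Morse-Bott property: Let g : ℝ^p × ℝ^d → ℝ be a parametric Morse-Bott function. Then for every x₀ ∈ ℝ^p, the function y ↦ g(x₀,y) is a Morse-Bott function: for every critical point y₀ of g(x₀,·) there exists an open neighborhood V of y₀ in ℝ^d such that {y ∈ ℝ^d : ∂_y g(x₀,y) = 0} ∩ V is a connected submanifold of ℝ^d of dimension dim(Ker(∂²_{yy} g(x₀,y₀))). -/
noncomputable section

open Set Filter Topology Metric RealInnerProductSpace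

abbrev Euc (n : ℕ) : Type := EuclideanSpace ℝ (Fin n)

variable {p d : ℕ}

/-- Gradient of `g` with respect to the second variable. -/
noncomputable def gradY (g : Euc p × Euc d → ℝ) (x : Euc p) (y : Euc d) : Euc d :=
  gradient (fun y' => g (x, y')) y

/-- Hessian `∂²_{yy} g` as a continuous linear map. -/
noncomputable def hessYY (g : Euc p × Euc d → ℝ) (x : Euc p) (y : Euc d) :
    Euc d →L[ℝ] Euc d :=
  fderiv ℝ (fun y' => gradY g x y') y

/-- Mixed Hessian `∂²_{xy} g` as a continuous linear map. -/
noncomputable def hessXY (g : Euc p × Euc d → ℝ) (x : Euc p) (y : Euc d) :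
    Euc p →L[ℝ] Euc d :=
  fderiv ℝ (fun x' => gradY g x' y) x

/-- Augmented critical set. -/
def augCrit (g : Euc p × Euc d → ℝ) : Set (Euc p × Euc d) :=
  {z | gradY g z.1 z.2 = 0}

/-- `S` is a `C²` embedded submanifold of dimension `k` of `E`. -/
def IsC2Submanifold {E : Type*} [NormedAddCommGroup E] [NormedSpace ℝ E]
    (k : ℕ) (S : Set E) : Prop :=
  ∀ z ∈ S, ∃ (W : Submodule ℝ E) (U V : Set E) (ψ ψinv : E → E),
    Module.finrank ℝ W = k ∧
    IsOpen U ∧ z ∈ U ∧ IsOpen V ∧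
    ContDiffOn ℝ 2 ψ U ∧ ContDiffOn ℝ 2 ψinv V ∧
    (∀ u ∈ U, ψinv (ψ u) = u) ∧ (∀ v ∈ V, ψ (ψinv v) = v) ∧
    ψ '' U = V ∧ ψ '' (U ∩ S) = V ∩ (W : Set E)

/-- Parametric Morse–Bott function. -/
def IsParamMorseBott (g : Euc p × Euc d → ℝ) : Prop :=
  ∀ z : Euc p × Euc d, gradY g z.1 z.2 = 0 →
    ∃ V : Set (Euc p × Euc d), IsOpen V ∧ z ∈ V ∧
      IsConnected (augCrit g ∩ V) ∧
      IsC2Submanifold (p + Module.finrank ℝ (LinearMap.ker (hessYY g z.1 z.2 : Euc d →ₗ[ℝ] Euc d)))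
        (augCrit g ∩ V)

/-- `g` is `L`-smooth in `y` for some `L > 0`: the `y`-gradient is `L`-Lipschitz in `y`. -/
def SmoothInY (g : Euc p × Euc d → ℝ) : Prop :=
  ∃ L : NNReal, 0 < L ∧ ∀ x, LipschitzWith L (fun y => gradY g x y)

/-- `g` is coercive in `y`: `g (x, y) → +∞` as `‖y‖ → +∞`. -/
def CoerciveInY (g : Euc p × Euc d → ℝ) : Prop :=
  ∀ x, Tendsto (fun y : Euc d => g (x, y)) (comap (fun y : Euc d => ‖y‖) atTop) atTop

/-- `φflow` is the gradient flow of `y ↦ g (x, y)` started at `y`. -/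
def IsGradFlow (g : Euc p × Euc d → ℝ) (φflow : ℝ → Euc p → Euc d → Euc d) : Prop :=
  (∀ x y, φflow 0 x y = y) ∧
  ∀ x y, ∀ t ∈ Ici (0:ℝ),
    HasDerivWithinAt (fun s => φflow s x y) (-(gradY g x (φflow t x y))) (Ici 0) t

/-- `φsel` is the selection obtained as the limit of the gradient flow `φflow`. -/
def IsFlowSelection (g : Euc p × Euc d → ℝ) (φflow : ℝ → Euc p → Euc d → Euc d)
    (φsel : Euc p → Euc d → Euc d) : Prop :=
  IsGradFlow g φflow ∧ ∀ x y, Tendsto (fun t => φflow t x y) atTop (𝓝 (φsel x y))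

/-- Moore–Penrose pseudo-inverse, characterized by the four Penrose conditions. -/
def IsMPInv {E : Type*} [NormedAddCommGroup E] [InnerProductSpace ℝ E] [CompleteSpace E]
    (A B : E →L[ℝ] E) : Prop :=
  A ∘L B ∘L A = A ∧ B ∘L A ∘L B = B ∧
  ContinuousLinearMap.adjoint (A ∘L B) = A ∘L B ∧
  ContinuousLinearMap.adjoint (B ∘L A) = B ∘L A

/-!
Let `H = ∂²_{yy} g(x₀, y₀)` and `K = ker H`. Near `(x₀, y₀)` a chart `ψ` maps the augmented
critical set onto a subspace `W` of dimension `p + dim K`. Since `∂_y g` vanishes on that set, its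
derivative kills the tangent space `(Dψ)⁻¹ W`; on the slice `{x₀} × ℝ^d` this says that
`Dψ (0, v) ∈ W` forces `H v = 0`, i.e. `v ∈ K`. With the dimension count, this makes
`Ψ = ψ (x₀, ·)` transversal to `W`: if `σ` has kernel `W` and values in a complement of `K`, then
`χ y = π_K (y - y₀) + σ (Ψ y)` has invertible derivative at `y₀` and `χ⁻¹ K = Ψ⁻¹ W`. By the
inverse function theorem `χ` is a local C² diffeomorphism onto a ball, which straightens the
critical set of `g (x₀, ·)` onto (ball ∩ K): a connected submanifold of dimension `dim K`.
-/

open Module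

theorem Set.InjOn.mem_iff_apply_mem_of_image_inter_eq {α β : Type*} {f : α → β}
    {S U : Set α} {W : Set β} (hf : InjOn f U) (himg : f '' (U ∩ S) = f '' U ∩ W)
    {u : α} (hu : u ∈ U) : u ∈ S ↔ f u ∈ W := by
  refine ⟨fun hS => (himg ▸ mem_image_of_mem f ⟨hu, hS⟩ : f u ∈ f '' U ∩ W).2, fun hW => ?_⟩
  have hmem : f u ∈ f '' (U ∩ S) := himg ▸ ⟨mem_image_of_mem f hu, hW⟩
  exact ((hf.mem_image_iff inter_subset_left hu).mp hmem).2

section Tangent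

variable {E G : Type*} [NormedAddCommGroup E] [NormedSpace ℝ E]
  [NormedAddCommGroup G] [NormedSpace ℝ G]

theorem fderiv_apply_eq_zero_of_eventuallyEq_zero {f : E → G} {W : Submodule ℝ E} {w₀ w : E}
    (hf : DifferentiableAt ℝ f w₀) (hw₀ : w₀ ∈ W) (hzero : f =ᶠ[𝓝[(W : Set E)] w₀] 0)
    (hw : w ∈ W) : fderiv ℝ f w₀ w = 0 := by
  have hline : Tendsto (fun t : ℝ => w₀ + t • w) (𝓝 0) (𝓝[(W : Set E)] w₀) := by
    refine tendsto_nhdsWithin_iff.mpr ⟨?_, .of_forall fun t => W.add_mem hw₀ (W.smul_mem t hw)⟩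
    exact (show Continuous fun t : ℝ => w₀ + t • w by fun_prop).tendsto' 0 w₀ (by simp)
  have hline_zero : (fun t : ℝ => f (w₀ + t • w)) =ᶠ[𝓝 0] fun _ => 0 := hline.eventually hzero
  rw [← hf.lineDeriv_eq_fderiv, lineDeriv, hline_zero.deriv_eq, deriv_const]

theorem fderiv_apply_eq_zero_of_chart {S U V : Set E} {W : Submodule ℝ E} {ψ ψinv : E → E}
    {F : E → G} {z₀ v : E} (hF : DifferentiableAt ℝ F z₀) (hFS : ∀ z ∈ S, F z = 0)
    (hU : IsOpen U) (hz₀U : z₀ ∈ U) (hz₀S : z₀ ∈ S) (hV : IsOpen V)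
    (hψ : DifferentiableAt ℝ ψ z₀) (hψinv : DifferentiableAt ℝ ψinv (ψ z₀))
    (hinv : ∀ u ∈ U, ψinv (ψ u) = u) (himgS : ψ '' (U ∩ S) = V ∩ W)
    (hv : fderiv ℝ ψ z₀ v ∈ W) : fderiv ℝ F z₀ v = 0 := by
  have hw₀ : ψ z₀ ∈ V ∩ W := himgS ▸ mem_image_of_mem ψ ⟨hz₀U, hz₀S⟩
  have hzero : F ∘ ψinv =ᶠ[𝓝[(W : Set E)] ψ z₀] 0 := by
    refine mem_nhdsWithin.mpr ⟨V, hV, hw₀.1, ?_⟩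
    rintro w hw
    obtain ⟨u, hu, rfl⟩ : w ∈ ψ '' (U ∩ S) := himgS ▸ hw
    simp [hinv u hu.1, hFS u hu.2]
  have hFψinv : DifferentiableAt ℝ (F ∘ ψinv) (ψ z₀) :=
    (hinv z₀ hz₀U ▸ hF).comp _ hψinv
  have hchain : fderiv ℝ F z₀ = (fderiv ℝ (F ∘ ψinv) (ψ z₀)).comp (fderiv ℝ ψ z₀) := by
    rw [← fderiv_comp z₀ hFψinv hψ]
    refine (Filter.eventuallyEq_of_mem (hU.mem_nhds hz₀U) fun u hu => ?_).fderiv_eq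
    simp [hinv u hu]
  rw [hchain]
  exact fderiv_apply_eq_zero_of_eventuallyEq_zero hFψinv hw₀.2 hzero hv

end Tangent

theorem exists_linearMap_ker_eq_range_le {K E Y : Type*} [Field K] [AddCommGroup E] [Module K E]
    [FiniteDimensional K E] [AddCommGroup Y] [Module K Y] [FiniteDimensional K Y]
    (W : Submodule K E) (Q : Submodule K Y) (hdim : finrank K W + finrank K Q = finrank K E) :
    ∃ σ : E →ₗ[K] Y, LinearMap.ker σ = W ∧ LinearMap.range σ ≤ Q := by
  obtain ⟨Wc, hWc⟩ := W.exists_isCompl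
  have hWcQ : finrank K Wc = finrank K Q := by
    have := Submodule.finrank_add_eq_of_isCompl hWc
    omega
  refine ⟨Q.subtype ∘ₗ (LinearEquiv.ofFinrankEq _ _ hWcQ : Wc →ₗ[K] Q) ∘ₗ
    Wc.projectionOnto W hWc.symm, ?_, ?_⟩
  · ext z
    simp
  · rintro _ ⟨z, rfl⟩
    simp

theorem injective_projection_add_comp {R E Y : Type*} [Ring R] [AddCommGroup E] [Module R E]
    [AddCommGroup Y] [Module R Y] {K Q : Submodule R Y} (hKQ : IsCompl K Q)
    {σ : E →ₗ[R] Y} (hσ : LinearMap.range σ ≤ Q) {L : Y →ₗ[R] E}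
    (hL : ∀ v, σ (L v) = 0 → v ∈ K) :
    Function.Injective (K.projection Q hKQ + σ ∘ₗ L) := by
  rw [← LinearMap.ker_eq_bot, LinearMap.ker_eq_bot']
  intro v hv
  simp only [LinearMap.add_apply, LinearMap.comp_apply] at hv
  have hσL : σ (L v) = 0 := by
    refine Submodule.disjoint_def.mp hKQ.disjoint _ ?_ (hσ ⟨L v, rfl⟩)
    rw [eq_neg_of_add_eq_zero_right hv]
    exact K.neg_mem (Submodule.projection_apply_mem hKQ v)
  simpa [hσL, Submodule.projection_apply_of_mem_left hKQ (hL v hσL)] using hv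

section Straightening

variable {Y : Type*} [NormedAddCommGroup Y] [NormedSpace ℝ Y]

theorem isC2Submanifold_inter_source {e : OpenPartialHomeomorph Y Y}
    (he : ContDiffOn ℝ 2 e e.source) (he_symm : ContDiffOn ℝ 2 e.symm e.target)
    {K : Submodule ℝ Y} {T : Set Y} (hT : T ∩ e.source = e.source ∩ e ⁻¹' K) :
    IsC2Submanifold (finrank ℝ K) (T ∩ e.source) := by
  intro z hz
  refine ⟨K, e.source, e.target, e, e.symm, rfl, e.open_source, hz.2, e.open_target, he,
    he_symm, fun _ hu => e.left_inv hu, fun _ hv => e.right_inv hv, e.image_source_eq_target, ?_⟩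
  rw [← inter_assoc, inter_comm _ T, inter_assoc, inter_self, hT, e.image_source_inter_eq',
    e.target_inter_inv_preimage_preimage]

theorem isConnected_inter_source {e : OpenPartialHomeomorph Y Y} {K : Submodule ℝ Y} {T : Set Y}
    (hT : T ∩ e.source = e.source ∩ e ⁻¹' K) (hconn : IsConnected (e.target ∩ K)) :
    IsConnected (T ∩ e.source) := by
  rw [hT, ← e.source_inter_preimage_target_inter, ← e.symm_image_target_inter_eq]
  exact hconn.image _ (e.continuousOn_symm.mono inter_subset_left)

theorem exists_openPartialHomeomorph_target_convex [CompleteSpace Y] {χ : Y → Y}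
    {χ' : Y ≃L[ℝ] Y} {U : Set Y} {y₀ : Y} (hU : IsOpen U) (hy₀ : y₀ ∈ U)
    (hχ : ContDiffOn ℝ 2 χ U) (hχ' : HasFDerivAt χ (χ' : Y →L[ℝ] Y) y₀) :
    ∃ e : OpenPartialHomeomorph Y Y, ⇑e = χ ∧ y₀ ∈ e.source ∧ e.source ⊆ U ∧
      Convex ℝ e.target ∧ ContDiffOn ℝ 2 e.symm e.target := by
  have hχy₀ : ContDiffAt ℝ 2 χ y₀ := hχ.contDiffAt (hU.mem_nhds hy₀)
  set Φ := hχy₀.toOpenPartialHomeomorph χ hχ' two_ne_zero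
  have hy₀Φ : y₀ ∈ Φ.source := hχy₀.mem_toOpenPartialHomeomorph_source hχ' two_ne_zero
  have hχy₀Φ : χ y₀ ∈ Φ.target := hχy₀.image_mem_toOpenPartialHomeomorph_target hχ' two_ne_zero
  have hsymm : ∀ᶠ w in 𝓝 (χ y₀), ContDiffAt ℝ 2 Φ.symm w :=
    (hχy₀.to_localInverse hχ' two_ne_zero).eventually (by simp)
  have hU' : Φ.symm ⁻¹' U ∈ 𝓝 (χ y₀) :=
    (Φ.continuousAt_symm hχy₀Φ).preimage_mem_nhds (by
      rw [show Φ.symm (χ y₀) = y₀ from Φ.left_inv hy₀Φ]; exact hU.mem_nhds hy₀)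
  obtain ⟨ε, hε, hball⟩ := Metric.mem_nhds_iff.mp
    (inter_mem (inter_mem (Φ.open_target.mem_nhds hχy₀Φ) hU') hsymm)
  refine ⟨(Φ.symm.restrOpen (ball (χ y₀) ε) isOpen_ball).symm, rfl, ?_, ?_, ?_, ?_⟩
  · exact ⟨hy₀Φ, by simpa [Φ] using hε⟩
  · rintro y ⟨hy, hyB⟩
    simpa [Φ.left_inv hy] using (hball hyB).1.2
  · have hball_target : ball (χ y₀) ε ⊆ Φ.target := fun w hw => (hball hw).1.1
    simpa [inter_eq_right.mpr hball_target] using convex_ball (χ y₀) ε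
  · exact fun w hw => ContDiffAt.contDiffWithinAt (hball hw.2).2

end Straightening

section Transversal

variable {Y E : Type*} [NormedAddCommGroup Y] [NormedSpace ℝ Y] [FiniteDimensional ℝ Y]
  [NormedAddCommGroup E] [NormedSpace ℝ E] [FiniteDimensional ℝ E]

theorem exists_contDiffOn_preimage_submodule_eq {U : Set Y} {Ψ : Y → E} {W : Submodule ℝ E}
    {K : Submodule ℝ Y} {y₀ : Y} (hU : IsOpen U) (hy₀ : y₀ ∈ U) (hΨ : ContDiffOn ℝ 2 Ψ U)
    (hdim : finrank ℝ W + finrank ℝ Y = finrank ℝ E + finrank ℝ K)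
    (hK : ∀ v, fderiv ℝ Ψ y₀ v ∈ W → v ∈ K) :
    ∃ (χ : Y → Y) (χ' : Y ≃L[ℝ] Y), ContDiffOn ℝ 2 χ U ∧ HasFDerivAt χ (χ' : Y →L[ℝ] Y) y₀ ∧
      χ ⁻¹' K = Ψ ⁻¹' W := by
  obtain ⟨Q, hKQ⟩ := K.exists_isCompl
  obtain ⟨σ, hσW, hσQ⟩ := exists_linearMap_ker_eq_range_le W Q (by
    have := Submodule.finrank_add_eq_of_isCompl hKQ
    omega)
  set P := (K.projection Q hKQ).toContinuousLinearMap
  set σc := σ.toContinuousLinearMap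
  have hinj : Function.Injective (P + σc ∘L fderiv ℝ Ψ y₀) :=
    injective_projection_add_comp hKQ hσQ (L := fderiv ℝ Ψ y₀) fun v hv => hK v (hσW ▸ hv)
  have hΨ' : HasFDerivAt Ψ (fderiv ℝ Ψ y₀) y₀ :=
    (hΨ.differentiableOn two_ne_zero y₀ hy₀).differentiableAt (hU.mem_nhds hy₀) |>.hasFDerivAt
  refine ⟨fun y => P (y - y₀) + σc (Ψ y),
    (LinearEquiv.ofInjectiveEndo _ hinj).toContinuousLinearEquiv, ?_, ?_, ?_⟩
  · exact (P.contDiff.comp (contDiff_id.sub contDiff_const)).contDiffOn.add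
      (σc.contDiff.comp_contDiffOn hΨ)
  · refine ((P.hasFDerivAt.comp y₀ ((hasFDerivAt_id y₀).sub_const y₀)).add
      (σc.hasFDerivAt.comp y₀ hΨ')).congr_fderiv ?_
    ext v
    simp [LinearEquiv.coe_ofInjectiveEndo]
  · ext y
    change K.projection Q hKQ (y - y₀) + σ (Ψ y) ∈ K ↔ Ψ y ∈ W
    rw [Submodule.add_mem_iff_right _ (Submodule.projection_apply_mem hKQ _), ← hσW,
      LinearMap.mem_ker]
    exact ⟨fun h => Submodule.disjoint_def.mp hKQ.disjoint _ h (hσQ ⟨_, rfl⟩),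
      fun h => h ▸ K.zero_mem⟩

theorem exists_isConnected_isC2Submanifold_of_mem_iff {T U : Set Y} {Ψ : Y → E}
    {W : Submodule ℝ E} {K : Submodule ℝ Y} {y₀ : Y} (hU : IsOpen U) (hy₀ : y₀ ∈ U)
    (hy₀T : y₀ ∈ T) (hΨ : ContDiffOn ℝ 2 Ψ U) (hT : ∀ y ∈ U, y ∈ T ↔ Ψ y ∈ W)
    (hdim : finrank ℝ W + finrank ℝ Y = finrank ℝ E + finrank ℝ K)
    (hK : ∀ v, fderiv ℝ Ψ y₀ v ∈ W → v ∈ K) :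
    ∃ V : Set Y, IsOpen V ∧ y₀ ∈ V ∧ IsConnected (T ∩ V) ∧
      IsC2Submanifold (finrank ℝ K) (T ∩ V) := by
  obtain ⟨χ, χ', hχ, hχ', hχK⟩ := exists_contDiffOn_preimage_submodule_eq hU hy₀ hΨ hdim hK
  obtain ⟨e, rfl, hy₀e, heU, he_convex, he_symm⟩ :=
    exists_openPartialHomeomorph_target_convex hU hy₀ hχ hχ'
  have hTe : T ∩ e.source = e.source ∩ e ⁻¹' K := by
    rw [hχK]
    ext y
    exact ⟨fun ⟨hyT, hy⟩ => ⟨hy, (hT y (heU hy)).mp hyT⟩,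
      fun ⟨hy, hyW⟩ => ⟨(hT y (heU hy)).mpr hyW, hy⟩⟩
  have hy₀K : e y₀ ∈ K := (Set.ext_iff.mp hχK y₀).mpr ((hT y₀ hy₀).mp hy₀T)
  refine ⟨e.source, e.open_source, hy₀e, isConnected_inter_source hTe ?_,
    isC2Submanifold_inter_source (hχ.mono heU) he_symm hTe⟩
  exact (he_convex.inter K.convex).isConnected ⟨e y₀, e.map_source hy₀e, hy₀K⟩

end Transversal
theorem gradY_eq_toDual_symm {g : Euc p × Euc d → ℝ} {x : Euc p} {y : Euc d}
    (hg : DifferentiableAt ℝ g (x, y)) :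
    gradY g x y = (InnerProductSpace.toDual ℝ (Euc d)).symm
      ((fderiv ℝ g (x, y)).comp (ContinuousLinearMap.inr ℝ (Euc p) (Euc d))) := by
  have h : HasFDerivAt (fun y' => g (x, y'))
      ((fderiv ℝ g (x, y)).comp (ContinuousLinearMap.inr ℝ (Euc p) (Euc d))) y :=
    hg.hasFDerivAt.comp y (hasFDerivAt_prodMk_right x y)
  rw [gradY, gradient, h.fderiv]

theorem contDiff_gradY {g : Euc p × Euc d → ℝ} {n : WithTop ℕ∞} (hg : ContDiff ℝ (n + 1) g) :
    ContDiff ℝ n (fun z : Euc p × Euc d => gradY g z.1 z.2) := by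
  have hdiff : Differentiable ℝ g := hg.differentiable (by simp)
  simp_rw [gradY_eq_toDual_symm (hdiff _)]
  exact (InnerProductSpace.toDual ℝ (Euc d)).symm.toContinuousLinearEquiv.contDiff.comp
    ((hg.fderiv_right le_rfl).clm_comp contDiff_const)

theorem hessYY_apply {g : Euc p × Euc d → ℝ} {x : Euc p} {y : Euc d}
    (hg : DifferentiableAt ℝ (fun z : Euc p × Euc d => gradY g z.1 z.2) (x, y)) (v : Euc d) :
    hessYY g x y v = fderiv ℝ (fun z : Euc p × Euc d => gradY g z.1 z.2) (x, y) (0, v) := by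
  have h : HasFDerivAt (fun y' => gradY g x y')
      ((fderiv ℝ _ (x, y)).comp (ContinuousLinearMap.inr ℝ (Euc p) (Euc d))) y :=
    hg.hasFDerivAt.comp y (hasFDerivAt_prodMk_right x y)
  rw [hessYY, h.fderiv]
  rfl

/-- Pointwise Morse-Bott property. -/
theorem pointwise_morse_bott
    {p d : ℕ} (g : Euc p × Euc d → ℝ)
    (hg : ContDiff ℝ 2 g) (hmb : IsParamMorseBott g)
    (x₀ : Euc p) (y₀ : Euc d) (hcrit : gradY g x₀ y₀ = 0) :
    ∃ V : Set (Euc d), IsOpen V ∧ y₀ ∈ V ∧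
      IsConnected ({y | gradY g x₀ y = 0} ∩ V) ∧
      IsC2Submanifold (Module.finrank ℝ (LinearMap.ker (hessYY g x₀ y₀ : Euc d →ₗ[ℝ] Euc d)))
        ({y | gradY g x₀ y = 0} ∩ V) := by
  obtain ⟨N, hN, hz₀N, -, hchart⟩ := hmb (x₀, y₀) hcrit
  obtain ⟨W, U, V, ψ, ψinv, hW, hU, hz₀U, hV, hψ, hψinv, hinv, -, himg, himgS⟩ :=
    hchart (x₀, y₀) ⟨hcrit, hz₀N⟩
  have hψ' : DifferentiableAt ℝ ψ (x₀, y₀) :=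
    (hψ.contDiffAt (hU.mem_nhds hz₀U)).differentiableAt two_ne_zero
  have hψinv' : DifferentiableAt ℝ ψinv (ψ (x₀, y₀)) := by
    have : ψ (x₀, y₀) ∈ V := himg ▸ mem_image_of_mem ψ hz₀U
    exact (hψinv.contDiffAt (hV.mem_nhds this)).differentiableAt two_ne_zero
  have hcrit_iff : ∀ y ∈ {y | (x₀, y) ∈ U ∩ N}, y ∈ {y | gradY g x₀ y = 0} ↔ ψ (x₀, y) ∈ W :=
    fun y hy => (and_iff_left hy.2).symm.trans
      ((Set.LeftInvOn.injOn hinv).mem_iff_apply_mem_of_image_inter_eq (himg ▸ himgS) hy.1)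
  refine exists_isConnected_isC2Submanifold_of_mem_iff (U := {y | (x₀, y) ∈ U ∩ N})
    ((hU.inter hN).preimage (Continuous.prodMk_right x₀)) ⟨hz₀U, hz₀N⟩ hcrit
    (hψ.comp (contDiff_prodMk_right x₀).contDiffOn fun y hy => hy.1) hcrit_iff
    ?_ fun v hv => ?_
  · rw [hW, finrank_prod, finrank_euclideanSpace_fin, finrank_euclideanSpace_fin]
    exact Nat.add_right_comm _ _ _
  · rw [(hψ'.hasFDerivAt.comp y₀ (hasFDerivAt_prodMk_right x₀ y₀)).fderiv] at hv
    have hF : DifferentiableAt ℝ (fun z : Euc p × Euc d => gradY g z.1 z.2) (x₀, y₀) :=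
      (contDiff_gradY (n := 1) hg).differentiable one_ne_zero _
    rw [LinearMap.mem_ker, ContinuousLinearMap.coe_coe, hessYY_apply hF]
    exact fderiv_apply_eq_zero_of_chart (S := augCrit g ∩ N) hF (fun z hz => hz.1) hU hz₀U
      ⟨hcrit, hz₀N⟩ hV hψ' hψinv' hinv himgS hv

end
end

section
/- Composition with parameterized diffeomorphisms preserves the parametric Morse-Bott property: Let h : ℝ^d → ℝ be a smooth Morse-Bott function, and let T : ℝ^p × ℝ^d → ℝ^d be a smooth map such that for every x ∈ ℝ^p the map τ_x : y ↦ T(x,y) is a diffeomorphism of ℝ^d. Then the function g(x,y) := h(τ_x(y)) is a parametric Morse-Bott function. -/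
noncomputable section

open Set Filter Topology Metric RealInnerProductSpace

variable {p d : ℕ}

/-- Gradient of a function of one (vector) variable. -/
noncomputable def grad1 {d : ℕ} (h : Euc d → ℝ) (y : Euc d) : Euc d := gradient h y

/-- Hessian of a function of one (vector) variable. -/
noncomputable def hess1 {d : ℕ} (h : Euc d → ℝ) (y : Euc d) : Euc d →L[ℝ] Euc d :=
  fderiv ℝ (fun y' => grad1 h y') y

/-- `h` is a Morse–Bott function. -/
def IsMorseBott {d : ℕ} (h : Euc d → ℝ) : Prop :=
  ∀ y₀ : Euc d, grad1 h y₀ = 0 →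
    ∃ V : Set (Euc d), IsOpen V ∧ y₀ ∈ V ∧
      IsConnected ({y | grad1 h y = 0} ∩ V) ∧
      IsC2Submanifold (Module.finrank ℝ (LinearMap.ker (hess1 h y₀ : Euc d →ₗ[ℝ] Euc d)))
        ({y | grad1 h y = 0} ∩ V)


/-!
The map `Φ (x, y) = (x, T (x, y))` is a diffeomorphism: its inverse `(x, y) ↦ (x, τₓ⁻¹ y)` is
smooth by the inverse function theorem, because `DΦ` is block triangular with the invertible
diagonal blocks `id` and `Dτₓ`. By the chain rule `∇_y g (x, y) = (Dτₓ)* ∇h (τₓ y)`, so the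
augmented critical set of `g` is `Φ⁻¹ (ℝᵖ × Crit h)`, and at a critical point
`∂²_yy g = (Dτₓ)* ∇²h (Dτₓ)`, whose kernel has the dimension of `ker ∇²h`. Charts of `Crit h`,
crossed with `ℝᵖ` and precomposed with `Φ`, are then charts of the augmented critical set.
-/

section Calculus

variable {𝕜 : Type*} [NontriviallyNormedField 𝕜] {E F : Type*}
  [NormedAddCommGroup E] [NormedSpace 𝕜 E] [NormedAddCommGroup F] [NormedSpace 𝕜 F]

theorem Function.LeftInverse.isInvertible_fderiv {τ : E → F} {σ : F → E}
    (hτ : Differentiable 𝕜 τ) (hσ : Differentiable 𝕜 σ)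
    (hl : Function.LeftInverse σ τ) (hr : Function.RightInverse σ τ) (y : E) :
    (fderiv 𝕜 τ y).IsInvertible := by
  have hστ := fderiv_comp y (hσ (τ y)) (hτ y)
  have hτσ := fderiv_comp (τ y) (hτ (σ (τ y))) (hσ (τ y))
  rw [hl.comp_eq_id, fderiv_id] at hστ
  rw [hr.comp_eq_id, fderiv_id, hl y] at hτσ
  exact .of_inverse hτσ.symm hστ.symm

theorem isInvertible_fderiv_fst_prodMk {T : E × F → F} {z : E × F}
    (hT : DifferentiableAt 𝕜 T z) (hTy : (fderiv 𝕜 (fun y => T (z.1, y)) z.2).IsInvertible) :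
    (fderiv 𝕜 (fun w : E × F => (w.1, T w)) z).IsInvertible := by
  obtain ⟨e, he⟩ := hTy
  have hTy' : fderiv 𝕜 (fun y => T (z.1, y)) z.2 = fderiv 𝕜 T z ∘L .inr 𝕜 E F :=
    (hT.hasFDerivAt.comp z.2 ((hasFDerivAt_const z.1 z.2).prodMk (hasFDerivAt_id z.2))).fderiv
  have he' (v : F) : e v = fderiv 𝕜 T z (0, v) := by
    rw [← ContinuousLinearEquiv.coe_coe, he, hTy']
    rfl
  rw [(hasFDerivAt_fst.prodMk hT.hasFDerivAt).fderiv]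
  refine ⟨(ContinuousLinearEquiv.refl 𝕜 E).skewProd e (fderiv 𝕜 T z ∘L .inl 𝕜 E F), ?_⟩
  refine ContinuousLinearMap.ext fun w => ?_
  simp [he', ← map_add]

end Calculus

section InverseFunction

variable {𝕂 : Type*} [RCLike 𝕂] {E F : Type*} [NormedAddCommGroup E] [NormedSpace 𝕂 E]
  [CompleteSpace E] [NormedAddCommGroup F] [NormedSpace 𝕂 F]

theorem ContDiff.of_leftInverse {n : WithTop ℕ∞} {f : E → F} {g : F → E}
    (hf : ContDiff 𝕂 n f) (hn : n ≠ 0) (hf' : ∀ x, (fderiv 𝕂 f x).IsInvertible)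
    (hl : Function.LeftInverse g f) (hr : Function.RightInverse g f) : ContDiff 𝕂 n g := by
  refine contDiff_iff_contDiffAt.2 fun y => ?_
  obtain ⟨e, he⟩ := hf' (g y)
  have hfd : HasFDerivAt f (e : E →L[𝕂] F) (g y) := he ▸ (hf.differentiable hn _).hasFDerivAt
  have hg := (hf.contDiffAt.hasStrictFDerivAt' hfd hn).localInverse_unique (.of_forall hl)
  rw [hr y] at hg
  have hinv := hf.contDiffAt.to_localInverse hfd hn
  rw [hr y] at hinv
  exact hinv.congr_of_eventuallyEq hg

end InverseFunction

section Gradient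

open ContinuousLinearMap InnerProductSpace

variable {E F : Type*} [NormedAddCommGroup E] [InnerProductSpace ℝ E] [CompleteSpace E]
  [NormedAddCommGroup F] [InnerProductSpace ℝ F] [CompleteSpace F]

theorem HasGradientAt.comp_hasFDerivAt {f : F → ℝ} {f' : F} {τ : E → F} {A : E →L[ℝ] F} {y : E}
    (hf : HasGradientAt f f' (τ y)) (hτ : HasFDerivAt τ A y) :
    HasGradientAt (f ∘ τ) (adjoint A f') y := by
  have hdual : toDual ℝ E (adjoint A f') = (toDual ℝ F f').comp A := by
    ext v
    simp [adjoint_inner_left]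
  rw [hasGradientAt_iff_hasFDerivAt, hdual]
  exact hf.hasFDerivAt.comp y hτ

theorem gradient_comp {f : F → ℝ} {τ : E → F} {y : E} (hf : DifferentiableAt ℝ f (τ y))
    (hτ : DifferentiableAt ℝ τ y) :
    gradient (f ∘ τ) y = adjoint (fderiv ℝ τ y) (gradient f (τ y)) :=
  (hf.hasGradientAt.comp_hasFDerivAt hτ.hasFDerivAt).gradient

theorem ContDiff.gradient {n : WithTop ℕ∞} {f : F → ℝ} (hf : ContDiff ℝ (n + 1) f) :
    ContDiff ℝ n (gradient f) :=
  (toDual ℝ F).symm.contDiff.comp (hf.fderiv_right le_rfl)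

theorem ContinuousLinearMap.IsInvertible.adjoint {A : E →L[ℝ] F} (hA : A.IsInvertible) :
    (adjoint A).IsInvertible := by
  obtain ⟨e, rfl⟩ := hA
  refine .of_inverse (g := ContinuousLinearMap.adjoint (e.symm : F →L[ℝ] E)) ?_ ?_ <;>
    simp [← adjoint_comp, adjoint_id]

theorem fderiv_gradient_comp_of_gradient_eq_zero {f : F → ℝ} {τ : E → F}
    (hf : ContDiff ℝ 2 f) (hτ : ContDiff ℝ 2 τ) {y : E} (hy : gradient f (τ y) = 0) :
    fderiv ℝ (gradient (f ∘ τ)) y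
      = adjoint (fderiv ℝ τ y) ∘L fderiv ℝ (gradient f) (τ y) ∘L fderiv ℝ τ y := by
  have hgrad : gradient (f ∘ τ) = fun y => adjoint (fderiv ℝ τ y) (gradient f (τ y)) :=
    funext fun y =>
      gradient_comp (hf.differentiable two_ne_zero _) (hτ.differentiable two_ne_zero _)
  have hadj : ContDiff ℝ 1 (fun y => adjoint (fderiv ℝ τ y)) :=
    (adjoint : (E →L[ℝ] F) ≃ₗᵢ⋆[ℝ] (F →L[ℝ] E)).contDiff.comp
      (hτ.fderiv_right one_add_one_eq_two.le)
  have hgf : DifferentiableAt ℝ (gradient f) (τ y) :=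
    (ContDiff.gradient (n := 1) hf).differentiable one_ne_zero _
  have hτd : DifferentiableAt ℝ τ y := hτ.differentiable two_ne_zero y
  have hgτ : HasFDerivAt (fun y => gradient f (τ y))
      (fderiv ℝ (gradient f) (τ y) ∘L fderiv ℝ τ y) y :=
    hgf.hasFDerivAt.comp y hτd.hasFDerivAt
  rw [hgrad, ((hadj.differentiable one_ne_zero y).hasFDerivAt.clm_apply hgτ).fderiv]
  -- the term with the second derivative of `τ` carries the factor `∇f (τ y) = 0`
  simp [hy]

end Gradient

section LinearAlgebra

open ContinuousLinearMap Module

variable {E F : Type*} [NormedAddCommGroup E] [InnerProductSpace ℝ E] [CompleteSpace E]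
  [NormedAddCommGroup F] [InnerProductSpace ℝ F] [CompleteSpace F]

theorem ker_adjoint_comp_comp {A : E →L[ℝ] F} (hA : A.IsInvertible) (H : F →L[ℝ] F) :
    LinearMap.ker ((adjoint A ∘L H ∘L A : E →L[ℝ] E) : E →ₗ[ℝ] E)
      = (LinearMap.ker (H : F →ₗ[ℝ] F)).comap (A : E →ₗ[ℝ] F) := by
  obtain ⟨e, he⟩ := hA.adjoint
  ext v
  simp [← he]

theorem finrank_ker_adjoint_comp_comp {A : E →L[ℝ] F} (hA : A.IsInvertible) (H : F →L[ℝ] F) :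
    finrank ℝ (LinearMap.ker ((adjoint A ∘L H ∘L A : E →L[ℝ] E) : E →ₗ[ℝ] E))
      = finrank ℝ (LinearMap.ker (H : F →ₗ[ℝ] F)) := by
  rw [ker_adjoint_comp_comp hA]
  obtain ⟨e, rfl⟩ := hA
  change finrank ℝ ((LinearMap.ker (H : F →ₗ[ℝ] F)).comap (e.toLinearEquiv : E →ₗ[ℝ] F)) = _
  rw [Submodule.comap_equiv_eq_map_symm, LinearEquiv.finrank_map_eq]

end LinearAlgebra

theorem Submodule.finrank_top_prod {K M N : Type*} [DivisionRing K] [AddCommGroup M] [Module K M]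
    [AddCommGroup N] [Module K N] [FiniteDimensional K M] [FiniteDimensional K N]
    (W : Submodule K N) :
    Module.finrank K ((⊤ : Submodule K M).prod W) = Module.finrank K M + Module.finrank K W := by
  let e : (⊤ : Submodule K M).prod W ≃ₗ[K] M × W :=
    { toFun := fun v => (v.1.1, ⟨v.1.2, v.2.2⟩)
      invFun := fun w => ⟨(w.1, w.2), trivial, w.2.2⟩
      map_add' := fun _ _ => rfl
      map_smul' := fun _ _ => rfl
      left_inv := fun _ => rfl
      right_inv := fun _ => rfl }
  rw [e.finrank_eq, Module.finrank_prod]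

section Submanifold

variable {E F : Type*} [NormedAddCommGroup E] [NormedSpace ℝ E]
  [NormedAddCommGroup F] [NormedSpace ℝ F]

theorem IsC2Submanifold.preimage_equiv {k : ℕ} {S : Set E} (hS : IsC2Submanifold k S)
    (Φ : E ≃ E) (hΦ : ContDiff ℝ 2 Φ) (hΦsymm : ContDiff ℝ 2 Φ.symm) :
    IsC2Submanifold k (Φ ⁻¹' S) := by
  intro z hz
  obtain ⟨W, U, V, ψ, ψinv, hW, hU, hzU, hV, hψ, hψinv, hl, hr, hUV, hSW⟩ := hS (Φ z) hz
  refine ⟨W, Φ ⁻¹' U, V, ψ ∘ Φ, Φ.symm ∘ ψinv, hW, hU.preimage hΦ.continuous, hzU, hV,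
    hψ.comp hΦ.contDiffOn (mapsTo_preimage _ _), hΦsymm.comp_contDiffOn hψinv,
    fun u hu => ?_, fun v hv => ?_, ?_, ?_⟩
  · simp [hl _ hu]
  · simp [hr _ hv]
  · rw [image_comp, Φ.image_preimage, hUV]
  · rw [← preimage_inter, image_comp, Φ.image_preimage, hSW]

theorem IsC2Submanifold.univ_prod [FiniteDimensional ℝ E] [FiniteDimensional ℝ F] {k : ℕ}
    {S : Set F} (hS : IsC2Submanifold k S) :
    IsC2Submanifold (Module.finrank ℝ E + k) (univ ×ˢ S : Set (E × F)) := by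
  rintro ⟨x, y⟩ ⟨-, hy⟩
  obtain ⟨W, U, V, ψ, ψinv, hW, hU, hyU, hV, hψ, hψinv, hl, hr, hUV, hSW⟩ := hS y hy
  refine ⟨(⊤ : Submodule ℝ E).prod W, univ ×ˢ U, univ ×ˢ V, Prod.map id ψ, Prod.map id ψinv,
    by rw [Submodule.finrank_top_prod, hW], isOpen_univ.prod hU, ⟨trivial, hyU⟩,
    isOpen_univ.prod hV, contDiffOn_fst.prodMk (hψ.comp contDiffOn_snd fun _ hq => hq.2),
    contDiffOn_fst.prodMk (hψinv.comp contDiffOn_snd fun _ hq => hq.2), ?_, ?_, ?_, ?_⟩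
  · rintro ⟨a, b⟩ ⟨-, hb⟩
    simp [hl b hb]
  · rintro ⟨a, b⟩ ⟨-, hb⟩
    simp [hr b hb]
  · rw [prodMap_image_prod, image_id, hUV]
  · rw [prod_inter_prod, univ_inter, prodMap_image_prod, image_id, hSW, Submodule.prod_coe,
      Submodule.top_coe, prod_inter_prod, univ_inter]

end Submanifold

section FiberwiseEquiv

variable {E F : Type*} {T : E × F → F} {σ : E → F → F}

def fiberwiseEquiv (T : E × F → F) (σ : E → F → F)
    (hl : ∀ x, Function.LeftInverse (σ x) fun y => T (x, y))
    (hr : ∀ x, Function.RightInverse (σ x) fun y => T (x, y)) : E × F ≃ E × F :=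
  Equiv.prodShear (Equiv.refl E) fun x => ⟨fun y => T (x, y), σ x, hl x, hr x⟩

variable (hl : ∀ x, Function.LeftInverse (σ x) fun y => T (x, y))
  (hr : ∀ x, Function.RightInverse (σ x) fun y => T (x, y))
  {𝕂 : Type*} [RCLike 𝕂] [NormedAddCommGroup E] [NormedSpace 𝕂 E]
  [NormedAddCommGroup F] [NormedSpace 𝕂 F]

theorem contDiff_fiberwiseEquiv {n : WithTop ℕ∞} (hT : ContDiff 𝕂 n T) :
    ContDiff 𝕂 n (fiberwiseEquiv T σ hl hr) :=
  contDiff_fst.prodMk hT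

theorem contDiff_fiberwiseEquiv_symm [CompleteSpace E] [CompleteSpace F] {n : WithTop ℕ∞}
    (hT : ContDiff 𝕂 n T) (hn : n ≠ 0) (hσ : ∀ x, Differentiable 𝕂 (σ x)) :
    ContDiff 𝕂 n (fiberwiseEquiv T σ hl hr).symm := by
  have hTy (x : E) : Differentiable 𝕂 fun y => T (x, y) :=
    (hT.differentiable hn).comp ((differentiable_const x).prodMk differentiable_id)
  refine (contDiff_fiberwiseEquiv hl hr hT).of_leftInverse hn (fun z => ?_)
    (fiberwiseEquiv T σ hl hr).left_inv (fiberwiseEquiv T σ hl hr).right_inv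
  exact isInvertible_fderiv_fst_prodMk (hT.differentiable hn z)
    ((hl z.1).isInvertible_fderiv (hTy z.1) (hσ z.1) (hr z.1) z.2)

end FiberwiseEquiv

section Composition

open ContinuousLinearMap

variable {h : Euc d → ℝ} {T : Euc p × Euc d → Euc d}

theorem gradY_comp (hh : Differentiable ℝ h) (hT : Differentiable ℝ T) (x : Euc p) (y : Euc d) :
    gradY (fun z => h (T z)) x y
      = adjoint (fderiv ℝ (fun y' => T (x, y')) y) (grad1 h (T (x, y))) :=
  gradient_comp (hh _) ((hT.comp ((differentiable_const x).prodMk differentiable_id)) y)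

theorem gradY_comp_eq_zero_iff (hh : Differentiable ℝ h) (hT : Differentiable ℝ T) {x : Euc p}
    {y : Euc d} (hTy : (fderiv ℝ (fun y' => T (x, y')) y).IsInvertible) :
    gradY (fun z => h (T z)) x y = 0 ↔ grad1 h (T (x, y)) = 0 := by
  obtain ⟨e, he⟩ := hTy.adjoint
  rw [gradY_comp hh hT, ← he, ContinuousLinearEquiv.coe_coe, e.map_eq_zero_iff]

theorem augCrit_comp (hh : Differentiable ℝ h) (hT : Differentiable ℝ T)
    (hTy : ∀ x y, (fderiv ℝ (fun y' => T (x, y')) y).IsInvertible) :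
    augCrit (fun z => h (T z)) = (fun z => (z.1, T z)) ⁻¹' (univ ×ˢ {y | grad1 h y = 0}) := by
  ext z
  simp [augCrit, gradY_comp_eq_zero_iff hh hT (hTy z.1 z.2)]

theorem hessYY_comp_of_grad1_eq_zero (hh : ContDiff ℝ 2 h) (hT : ContDiff ℝ 2 T) {x : Euc p}
    {y : Euc d} (hcrit : grad1 h (T (x, y)) = 0) :
    hessYY (fun z => h (T z)) x y
      = adjoint (fderiv ℝ (fun y' => T (x, y')) y) ∘L hess1 h (T (x, y))
          ∘L fderiv ℝ (fun y' => T (x, y')) y :=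
  fderiv_gradient_comp_of_gradient_eq_zero hh (hT.comp (contDiff_const.prodMk contDiff_id)) hcrit

end Composition

/-- Composition with parameterized diffeomorphisms preserves
the parametric Morse-Bott property. -/
theorem diffeo_comp_preserves_morse_bott
    {p d : ℕ} (h : Euc d → ℝ) (hh : ContDiff ℝ (⊤ : ℕ∞) h) (hmb : IsMorseBott h)
    (T : Euc p × Euc d → Euc d) (hT : ContDiff ℝ (⊤ : ℕ∞) T)
    (hdiffeo : ∀ x : Euc p, ∃ σ : Euc d → Euc d, ContDiff ℝ (⊤ : ℕ∞) σ ∧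
      Function.LeftInverse σ (fun y => T (x, y)) ∧
      Function.RightInverse σ (fun y => T (x, y))) :
    IsParamMorseBott (fun z : Euc p × Euc d => h (T z)) := by
  choose σ hσ hσl hσr using hdiffeo
  have hh2 : ContDiff ℝ 2 h := contDiff_infty.1 hh 2
  have hT2 : ContDiff ℝ 2 T := contDiff_infty.1 hT 2
  have hTy (x : Euc p) (y : Euc d) : (fderiv ℝ (fun y' => T (x, y')) y).IsInvertible :=
    (hσl x).isInvertible_fderiv ((hT2.comp (contDiff_const.prodMk contDiff_id)).differentiable
      two_ne_zero) ((hσ x).differentiable (by simp)) (hσr x) y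
  let Φ := fiberwiseEquiv T σ hσl hσr
  have hΦ : ContDiff ℝ 2 Φ := contDiff_fiberwiseEquiv hσl hσr hT2
  have hΦsymm : ContDiff ℝ 2 Φ.symm := contDiff_fiberwiseEquiv_symm hσl hσr hT2 two_ne_zero
    fun x => (hσ x).differentiable (by simp)
  have hcrit : augCrit (fun z => h (T z)) = Φ ⁻¹' (univ ×ˢ {y | grad1 h y = 0}) :=
    augCrit_comp (hh2.differentiable two_ne_zero) (hT2.differentiable two_ne_zero) hTy
  intro z hz
  have hTz : grad1 h (T z) = 0 := (hcrit.subset (show z ∈ augCrit _ from hz)).2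
  obtain ⟨V, hV, hTzV, hconn, hsub⟩ := hmb (T z) hTz
  have hcritV : augCrit (fun z => h (T z)) ∩ Φ ⁻¹' (univ ×ˢ V)
      = Φ ⁻¹' (univ ×ˢ ({y | grad1 h y = 0} ∩ V)) := by
    rw [hcrit, ← preimage_inter, prod_inter_prod, univ_inter]
  refine ⟨Φ ⁻¹' (univ ×ˢ V), (isOpen_univ.prod hV).preimage hΦ.continuous, ⟨trivial, hTzV⟩,
    ?_, ?_⟩
  · rw [hcritV, ← Φ.image_symm_eq_preimage]
    exact (isConnected_univ.prod hconn).image _ hΦsymm.continuous.continuousOn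
  · rw [hcritV, hessYY_comp_of_grad1_eq_zero hh2 hT2 hTz, finrank_ker_adjoint_comp_comp (hTy _ _)]
    simpa only [finrank_euclideanSpace_fin] using
      (hsub.univ_prod (E := Euc p)).preimage_equiv Φ hΦ hΦsymm

end
end

section
/- Uniformly bounded pseudo-inverse of the limiting Hessian: Let g : ℝ^p × ℝ^d → ℝ be three-times continuously differentiable, a parametric Morse-Bott function, L-smooth in y, and coercive in y, and let φ denote the flow selection. Fix (x₀,y) ∈ ℝ^p × ℝ^d and assume y₀ := φ(x₀,y) is a local minimizer of y' ↦ g(x₀,y'). Define A_∞(x,y) := ∂²_{yy} g(x, φ(x,y)). Then there exist an open neighborhood U of x₀ and a constant λ > 0 such that λ · ‖A_∞(x,y)^†‖_op ≤ 1 for all x ∈ U, where † denotes the Moore–Penrose pseudo-inverse and ‖·‖_op the operator norm. -/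
noncomputable section

open Set Filter Topology Metric RealInnerProductSpace

variable {p d : ℕ}

/-! The selected points `φ (x, y)` are limits of gradient trajectories, hence critical points of
`g (x, ·)`; since `g` decreases along the flow and `g (x₀, ·)` is coercive, they stay in a fixed
ball for `x` near `x₀`. At a critical point `z`, the Morse–Bott chart embeds a space of dimension
`p + dim ker ∂²_{yy} g (z)` into the kernel of the derivative of `∂_y g` at every nearby critical
point `z'`, so `dim ker ∂²_{yy} g` does not drop near `z`. For operators close to a fixed `T` whose
kernel is at least as large as that of `T`, the smallest nonzero singular value is bounded below,
which bounds the Moore–Penrose pseudo-inverse. Compactness of the ball makes the bound uniform. -/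

section PseudoInverse

variable {E : Type*} [NormedAddCommGroup E] [InnerProductSpace ℝ E] [CompleteSpace E]
  {A B : E →L[ℝ] E}

theorem IsMPInv.apply_mem_orthogonal_ker (h : IsMPInv A B) (w : E) :
    B w ∈ (LinearMap.ker (A : E →ₗ[ℝ] E))ᗮ := by
  obtain ⟨-, hBAB, -, hBA⟩ := h
  rw [Submodule.mem_orthogonal]
  intro k hk
  have hBw : B w = (B ∘L A) (B w) := by
    simpa using (ContinuousLinearMap.ext_iff.1 hBAB w).symm
  rw [hBw, ← hBA, ContinuousLinearMap.adjoint_inner_right]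
  simp [show A k = 0 from hk]

theorem IsMPInv.norm_apply_apply_le (h : IsMPInv A B) (w : E) : ‖A (B w)‖ ≤ ‖w‖ := by
  obtain ⟨hABA, -, hAB, -⟩ := h
  have hidem : A (B (A (B w))) = A (B w) := by
    simpa using ContinuousLinearMap.ext_iff.1 hABA (B w)
  -- `A ∘L B` is a self-adjoint idempotent, i.e. an orthogonal projection
  have hsq : ‖A (B w)‖ ^ 2 = ⟪w, A (B w)⟫ := by
    rw [← real_inner_self_eq_norm_sq]
    calc ⟪A (B w), A (B w)⟫ = ⟪(A ∘L B) w, (A ∘L B) w⟫ := rfl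
      _ = ⟪w, (A ∘L B) ((A ∘L B) w)⟫ := by
          rw [← ContinuousLinearMap.adjoint_inner_right, hAB]
      _ = ⟪w, A (B w)⟫ := by simp [hidem]
  have hle : ‖A (B w)‖ ^ 2 ≤ ‖w‖ * ‖A (B w)‖ := hsq ▸ real_inner_le_norm _ _
  nlinarith [norm_nonneg (A (B w)), norm_nonneg w]

theorem IsMPInv.mul_norm_le_one (h : IsMPInv A B) {c : ℝ} (hc : 0 < c)
    (hA : ∀ v ∈ (LinearMap.ker (A : E →ₗ[ℝ] E))ᗮ, c * ‖v‖ ≤ ‖A v‖) : c * ‖B‖ ≤ 1 := by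
  rw [← le_div_iff₀' hc, one_div]
  refine ContinuousLinearMap.opNorm_le_bound _ (by positivity) fun w => ?_
  rw [inv_mul_eq_div, le_div_iff₀' hc]
  exact (hA _ (h.apply_mem_orthogonal_ker w)).trans (h.norm_apply_apply_le w)

end PseudoInverse

section Perturbation

variable {E : Type*} [NormedAddCommGroup E] [InnerProductSpace ℝ E] [FiniteDimensional ℝ E]

theorem Submodule.finrank_le_of_disjoint_orthogonal {S K : Submodule ℝ E}
    (h : Disjoint S Kᗮ) : Module.finrank ℝ S ≤ Module.finrank ℝ K := by
  have := Submodule.finrank_add_finrank_le_of_disjoint h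
  have := K.finrank_add_finrank_orthogonal
  omega

namespace ContinuousLinearMap

theorem exists_norm_le_mul_norm_apply_of_mem_orthogonal_ker (T : E →L[ℝ] E) :
    ∃ K > 0, ∀ u ∈ (LinearMap.ker (T : E →ₗ[ℝ] E))ᗮ, ‖u‖ ≤ K * ‖T u‖ := by
  set N := (LinearMap.ker (T : E →ₗ[ℝ] E))ᗮ
  have hinj : LinearMap.ker ((T : E →ₗ[ℝ] E).comp N.subtype) = ⊥ := by
    rw [LinearMap.ker_eq_bot']
    intro u hu
    exact Subtype.ext ((Submodule.orthogonal_disjoint _).le_bot ⟨hu, u.2⟩)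
  obtain ⟨K, hK, hanti⟩ := LinearMap.exists_antilipschitzWith _ hinj
  refine ⟨K, hK, fun u hu => ?_⟩
  simpa using hanti.le_mul_dist ⟨u, hu⟩ 0

omit [FiniteDimensional ℝ E] in
theorem norm_apply_le_of_mem_sup_span_singleton {A : E →L[ℝ] E} {c : ℝ} (hc : 0 ≤ c) {v : E}
    (hv : v ∈ (LinearMap.ker (A : E →ₗ[ℝ] E))ᗮ) (hAv : ‖A v‖ ≤ c * ‖v‖) {u : E}
    (hu : u ∈ LinearMap.ker (A : E →ₗ[ℝ] E) ⊔ ℝ ∙ v) : ‖A u‖ ≤ c * ‖u‖ := by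
  obtain ⟨k, hk, w, hw, rfl⟩ := Submodule.mem_sup.1 hu
  obtain ⟨t, rfl⟩ := Submodule.mem_span_singleton.1 hw
  have hAk : A k = 0 := hk
  have horth : ⟪k, t • v⟫ = 0 :=
    Submodule.inner_right_of_mem_orthogonal hk (Submodule.smul_mem _ t hv)
  have hpyth : ‖t • v‖ ≤ ‖k + t • v‖ := by
    have := norm_add_sq_eq_norm_sq_add_norm_sq_real horth
    nlinarith [norm_nonneg (t • v), norm_nonneg (k + t • v), sq_nonneg ‖k‖]
  calc ‖A (k + t • v)‖ = ‖t‖ * ‖A v‖ := by simp [hAk, norm_smul]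
    _ ≤ ‖t‖ * (c * ‖v‖) := by gcongr
    _ = c * ‖t • v‖ := by rw [norm_smul]; ring
    _ ≤ c * ‖k + t • v‖ := by gcongr

/-- The smallest nonzero singular value is bounded below near `T` as long as the kernel does not
shrink. -/
theorem eventually_mul_norm_le_norm_apply_of_finrank_ker_le (T : E →L[ℝ] E) :
    ∃ c > 0, ∀ᶠ A : E →L[ℝ] E in 𝓝 T,
      Module.finrank ℝ (LinearMap.ker (T : E →ₗ[ℝ] E)) ≤
          Module.finrank ℝ (LinearMap.ker (A : E →ₗ[ℝ] E)) →
        ∀ v ∈ (LinearMap.ker (A : E →ₗ[ℝ] E))ᗮ, c * ‖v‖ ≤ ‖A v‖ := by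
  obtain ⟨K, hK, hT⟩ := T.exists_norm_le_mul_norm_apply_of_mem_orthogonal_ker
  set c := (2 * K)⁻¹
  have hc : 0 < c := by positivity
  refine ⟨c, hc, ?_⟩
  filter_upwards [ball_mem_nhds T hc] with A hA hrank v hv
  by_contra! hsmall
  have hvker : v ∉ LinearMap.ker (A : E →ₗ[ℝ] E) := fun hvker => by
    obtain rfl : v = 0 := (Submodule.orthogonal_disjoint _).le_bot ⟨hvker, hv⟩
    simp at hsmall
  -- `A` is `c`-small on `ker A ⊔ ℝ ∙ v`, so `T` is `2c`-small there and it misses `(ker T)ᗮ`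
  have hdisj : Disjoint (LinearMap.ker (A : E →ₗ[ℝ] E) ⊔ ℝ ∙ v)
      (LinearMap.ker (T : E →ₗ[ℝ] E))ᗮ := by
    refine Submodule.disjoint_def.2 fun u huS huN => ?_
    by_contra hu
    have hAu := norm_apply_le_of_mem_sup_span_singleton hc.le hv hsmall.le huS
    have hTA : ‖(T - A) u‖ < c * ‖u‖ := by
      calc ‖(T - A) u‖ ≤ ‖T - A‖ * ‖u‖ := (T - A).le_opNorm u
        _ < c * ‖u‖ := by
          rw [← dist_eq_norm']
          exact mul_lt_mul_of_pos_right (mem_ball.1 hA) (norm_pos_iff.2 hu)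
    have : ‖u‖ < ‖u‖ := calc
      ‖u‖ ≤ K * ‖T u‖ := hT u huN
      _ ≤ K * (‖A u‖ + ‖(T - A) u‖) := by gcongr; simpa using norm_add_le (A u) ((T - A) u)
      _ < K * (c * ‖u‖ + c * ‖u‖) := mul_lt_mul_of_pos_left (by linarith) hK
      _ = ‖u‖ := by simp only [c]; field_simp; ring
    exact this.false
  have := Submodule.finrank_le_of_disjoint_orthogonal hdisj
  rw [Submodule.finrank_sup_span_singleton hvker] at this
  omega

end ContinuousLinearMap

end Perturbation

theorem LinearMap.finrank_ker_le_add_finrank_ker_comp_inr {K X Y Z : Type*} [Field K]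
    [AddCommGroup X] [Module K X] [AddCommGroup Y] [Module K Y] [AddCommGroup Z] [Module K Z]
    [FiniteDimensional K X] [FiniteDimensional K Y] (L : X × Y →ₗ[K] Z) :
    Module.finrank K (LinearMap.ker L) ≤
      Module.finrank K X + Module.finrank K (LinearMap.ker (L ∘ₗ LinearMap.inr K X Y)) := by
  set π := (LinearMap.fst K X Y) ∘ₗ (LinearMap.ker L).subtype
  have hrange : Module.finrank K (LinearMap.range π) ≤ Module.finrank K X :=
    Submodule.finrank_le _
  have hmem : ∀ a : LinearMap.ker π, ((a : LinearMap.ker L) : X × Y).2 ∈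
      LinearMap.ker (L ∘ₗ LinearMap.inr K X Y) := by
    rintro ⟨⟨⟨a₁, a₂⟩, ha⟩, ha₁⟩
    obtain rfl : a₁ = 0 := ha₁
    exact ha
  have hker : Module.finrank K (LinearMap.ker π) ≤
      Module.finrank K (LinearMap.ker (L ∘ₗ LinearMap.inr K X Y)) := by
    refine LinearMap.finrank_le_finrank_of_injective (f := LinearMap.codRestrict _
      ((LinearMap.snd K X Y) ∘ₗ (LinearMap.ker L).subtype ∘ₗ (LinearMap.ker π).subtype) hmem) ?_
    rintro ⟨⟨⟨a₁, a₂⟩, ha⟩, ha₁⟩ ⟨⟨⟨b₁, b₂⟩, hb⟩, hb₁⟩ hab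
    obtain rfl : a₁ = 0 := ha₁
    obtain rfl : b₁ = 0 := hb₁
    obtain rfl : a₂ = b₂ := congrArg Subtype.val hab
    rfl
  have := π.finrank_range_add_finrank_ker
  omega

theorem finrank_le_finrank_ker_fderiv_of_chart {E F : Type*}
    [NormedAddCommGroup E] [NormedSpace ℝ E] [FiniteDimensional ℝ E]
    [NormedAddCommGroup F] [NormedSpace ℝ F] {G : E → F} {S : Set E} (hS : S ⊆ G ⁻¹' {0})
    {W : Submodule ℝ E} {U V : Set E} {ψ ψinv : E → E} (hV : IsOpen V)
    (hli : ∀ u ∈ U, ψinv (ψ u) = u) (hri : ∀ v ∈ V, ψ (ψinv v) = v)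
    (himg : ψ '' (U ∩ S) = V ∩ W) {z : E} (hz : z ∈ U ∩ S)
    (hψ : DifferentiableAt ℝ ψ z) (hψinv : DifferentiableAt ℝ ψinv (ψ z))
    (hG : DifferentiableAt ℝ G z) :
    Module.finrank ℝ W ≤ Module.finrank ℝ (LinearMap.ker (fderiv ℝ G z : E →ₗ[ℝ] F)) := by
  have hψz : ψ z ∈ V ∩ W := himg ▸ mem_image_of_mem ψ hz
  have hzψ : ψinv (ψ z) = z := hli z hz.1
  -- the chart pulls the flat piece `W` near `ψ z` back into `S`
  set χ : W → E := fun w => ψinv (ψ z + w)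
  have hχS : ∀ᶠ w in 𝓝 (0 : W), χ w ∈ S := by
    have hcont : Continuous fun w : W => ψ z + (w : E) := by fun_prop
    filter_upwards [hcont.continuousAt.preimage_mem_nhds (by simpa using hV.mem_nhds hψz.1)]
      with w hw
    have hwS : ψ z + (w : E) ∈ ψ '' (U ∩ S) := himg ▸ ⟨hw, W.add_mem hψz.2 w.2⟩
    obtain ⟨u, hu, hψu⟩ := hwS
    simpa [χ, ← hψu, hli u hu.1] using hu.2
  set D := fderiv ℝ ψinv (ψ z)
  have hχ : HasFDerivAt χ (D ∘L W.subtypeL) 0 := by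
    refine HasFDerivAt.comp (0 : W) (by simpa using hψinv.hasFDerivAt) ?_
    exact W.subtypeL.hasFDerivAt.const_add (ψ z)
  have hGχ : fderiv ℝ G z ∘L D ∘L W.subtypeL = 0 := by
    have hG' : HasFDerivAt G (fderiv ℝ G z) (χ 0) := by simpa [χ, hzψ] using hG.hasFDerivAt
    exact (hG'.comp (0 : W) hχ).unique
      ((hasFDerivAt_const 0 0).congr_of_eventuallyEq (hχS.mono fun _ hw => hS hw))
  have hDinj : Function.Injective D := by
    have hid : fderiv ℝ ψ z ∘L D = ContinuousLinearMap.id ℝ E := by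
      have hψ' : HasFDerivAt ψ (fderiv ℝ ψ z) (ψinv (ψ z)) := by
        rw [hzψ]; exact hψ.hasFDerivAt
      exact (hψ'.comp (ψ z) hψinv.hasFDerivAt).unique
        ((hasFDerivAt_id (ψ z)).congr_of_eventuallyEq
          (Filter.mem_of_superset (hV.mem_nhds hψz.1) hri))
    exact Function.LeftInverse.injective fun v => by
      simpa using ContinuousLinearMap.ext_iff.1 hid v
  refine LinearMap.finrank_le_finrank_of_injective (f := LinearMap.codRestrict _
    ((D : E →ₗ[ℝ] E) ∘ₗ W.subtype) fun w => ?_) fun a b hab => Subtype.ext (hDinj ?_)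
  · simpa using ContinuousLinearMap.ext_iff.1 hGχ w
  · simpa using congrArg Subtype.val hab

theorem IsCompact.exists_pos_eventually_forall {X Y : Type*} [TopologicalSpace X]
    [TopologicalSpace Y] {x₀ : X} {K : Set Y} (hK : IsCompact K) {P : ℝ → X × Y → Prop}
    (hP : ∀ z, Antitone (P · z)) (h : ∀ y ∈ K, ∃ c > 0, ∀ᶠ z in 𝓝 (x₀, y), P c z) :
    ∃ c > 0, ∀ᶠ x in 𝓝 x₀, ∀ y ∈ K, P c (x, y) := by
  refine hK.induction_on (p := fun s => ∃ c > 0, ∀ᶠ x in 𝓝 x₀, ∀ y ∈ s, P c (x, y))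
    ⟨1, one_pos, by simp⟩ ?_ ?_ ?_
  · rintro s t hst ⟨c, hc, ht⟩
    exact ⟨c, hc, ht.mono fun x hx y hy => hx y (hst hy)⟩
  · rintro s t ⟨c, hc, hs⟩ ⟨c', hc', ht⟩
    refine ⟨min c c', lt_min hc hc', ?_⟩
    filter_upwards [hs, ht] with x hxs hxt y hy
    rcases hy with hy | hy
    · exact hP _ (min_le_left c c') (hxs y hy)
    · exact hP _ (min_le_right c c') (hxt y hy)
  · intro y hy
    obtain ⟨c, hc, hev⟩ := h y hy
    rw [nhds_prod_eq] at hev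
    obtain ⟨pa, hpa, pb, hpb, hprod⟩ := Filter.eventually_prod_iff.1 hev
    exact ⟨{y | pb y}, mem_nhdsWithin_of_mem_nhds hpb, c, hc,
      hpa.mono fun _ hx _ hy' => hprod hx hy'⟩

theorem eq_zero_of_tendsto_of_hasDerivAt {E : Type*} [NormedAddCommGroup E] [NormedSpace ℝ E]
    {F : E → E} {φ : ℝ → E} {l : E} (hF : ContinuousAt F l)
    (hφ : ∀ᶠ t in atTop, HasDerivAt φ (F (φ t)) t) (hlim : Tendsto φ atTop (𝓝 l)) :
    F l = 0 := by
  by_contra hv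
  set v := F l
  have hv2 : 0 < ‖v‖ / 2 := by positivity
  have hclose : ∀ᶠ t in atTop, ‖F (φ t) - v‖ ≤ ‖v‖ / 2 :=
    ((hF.tendsto.comp hlim).eventually (closedBall_mem_nhds v hv2)).mono fun t ht => by
      simpa [dist_eq_norm] using ht
  obtain ⟨T, hT⟩ := (hφ.and hclose).exists_forall_of_atTop
  have hstep : ∀ t ≥ T, ‖v‖ / 2 ≤ ‖φ (t + 1) - φ t‖ := fun t ht => by
    have hmv := (convex_Ici T).norm_image_sub_le_of_norm_hasDerivWithin_le
      (f := fun s => φ s - s • v) (f' := fun s => F (φ s) - v)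
      (fun s hs => (((hT s hs).1.sub ((hasDerivAt_id s).smul_const v)).congr_deriv
        (by simp)).hasDerivWithinAt) (fun s hs => (hT s hs).2)
      (mem_Ici.2 ht) (mem_Ici.2 (by linarith : T ≤ t + 1))
    simp only [add_sub_cancel_left, norm_one, mul_one] at hmv
    set w := φ (t + 1) - (t + 1) • v - (φ t - t • v)
    have hsplit : φ (t + 1) - φ t = w + v := by simp only [w, add_smul, one_smul]; abel
    have := norm_sub_le (w + v) w
    rw [add_sub_cancel_left] at this
    rw [hsplit]
    linarith
  have hdiff : Tendsto (fun t => φ (t + 1) - φ t) atTop (𝓝 0) := by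
    simpa using (hlim.comp (tendsto_atTop_add_const_right _ 1 tendsto_id)).sub hlim
  obtain ⟨t, htT, ht⟩ :=
    ((eventually_ge_atTop T).and (hdiff.eventually (ball_mem_nhds 0 hv2))).exists
  have := hstep t htT
  rw [dist_zero_right] at ht
  linarith

theorem antitoneOn_comp_of_hasDerivWithinAt_neg_gradient {E : Type*} [NormedAddCommGroup E]
    [InnerProductSpace ℝ E] [CompleteSpace E] {f : E → ℝ} (hf : Differentiable ℝ f)
    {φ : ℝ → E} (hφ : ∀ t ∈ Ici (0 : ℝ), HasDerivWithinAt φ (-gradient f (φ t)) (Ici 0) t) :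
    AntitoneOn (f ∘ φ) (Ici 0) := by
  have hderiv : ∀ t ∈ Ici (0 : ℝ),
      HasDerivWithinAt (f ∘ φ) (-‖gradient f (φ t)‖ ^ 2) (Ici 0) t := fun t ht => by
    refine ((hf (φ t)).hasGradientAt.hasFDerivAt.comp_hasDerivWithinAt t (hφ t ht)).congr_deriv ?_
    rw [InnerProductSpace.toDual_apply_apply, inner_neg_right, real_inner_self_eq_norm_sq]
  refine antitoneOn_of_hasDerivWithinAt_nonpos (f' := fun t => -‖gradient f (φ t)‖ ^ 2)
    (convex_Ici 0) (fun t ht => (hderiv t ht).continuousWithinAt) (fun t ht => ?_)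
    fun _ _ => neg_nonpos.2 (sq_nonneg _)
  rw [interior_Ici] at ht ⊢
  exact (hderiv t (mem_Ici.2 (le_of_lt ht))).mono Ioi_subset_Ici_self

/-- Coercivity at `x₀` and compactness of a large sphere give a sphere on which
`g (x, ·) > g (x, y)` for all `x` near `x₀`; a path in the sublevel set cannot cross it. -/
theorem exists_eventually_norm_lt_of_sublevel {X E : Type*} [TopologicalSpace X]
    [NormedAddCommGroup E] [NormedSpace ℝ E] [ProperSpace E] {g : X × E → ℝ}
    (hg : Continuous g) {x₀ : X}
    (hco : Tendsto (fun y => g (x₀, y)) (comap (fun y => ‖y‖) atTop) atTop) (y : E) :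
    ∃ R, ∀ᶠ x in 𝓝 x₀, ∀ φ : ℝ → E, ContinuousOn φ (Ici 0) → φ 0 = y →
      (∀ t ∈ Ici (0 : ℝ), g (x, φ t) ≤ g (x, y)) → ∀ t ∈ Ici (0 : ℝ), ‖φ t‖ < R := by
  obtain ⟨R₀, hR₀⟩ := (eventually_comap.1
    (hco.eventually (eventually_gt_atTop (g (x₀, y))))).exists_forall_of_atTop
  set R := max R₀ (‖y‖ + 1)
  refine ⟨R, ?_⟩
  have hsphere : ∀ᶠ x in 𝓝 x₀, ∀ v ∈ sphere (0 : E) R, g (x, y) < g (x, v) := by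
    refine (isCompact_sphere 0 R).eventually_forall_of_forall_eventually fun v hv => ?_
    have hcont : Continuous fun z : X × E => g (z.1, y) := by fun_prop
    exact hcont.continuousAt.eventually_lt hg.continuousAt
      (hR₀ R (le_max_left _ _) v (by simpa using hv))
  filter_upwards [hsphere] with x hx φ hφc hφ0 hsub t ht
  by_contra! hR
  obtain ⟨s, hs, hφs⟩ := intermediate_value_Icc ht (hφc.norm.mono Icc_subset_Ici_self)
    ⟨by rw [hφ0]; linarith [le_max_right R₀ (‖y‖ + 1)], hR⟩
  exact (hsub s hs.1).not_gt (hx (φ s) (by simpa using hφs))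

section CriticalSet

variable {g : Euc p × Euc d → ℝ}

theorem fderiv_comp_prodMk_right {X Y F : Type*} [NormedAddCommGroup X] [NormedSpace ℝ X]
    [NormedAddCommGroup Y] [NormedSpace ℝ Y] [NormedAddCommGroup F] [NormedSpace ℝ F]
    {f : X × Y → F} {x : X} {y : Y} (hf : DifferentiableAt ℝ f (x, y)) :
    fderiv ℝ (fun y' => f (x, y')) y = fderiv ℝ f (x, y) ∘L ContinuousLinearMap.inr ℝ _ _ :=
  (hf.hasFDerivAt.comp y (hasFDerivAt_prodMk_right x y)).fderiv

theorem uncurry_gradY_eq (hg : Differentiable ℝ g) :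
    Function.uncurry (gradY g) = fun z =>
      (InnerProductSpace.toDual ℝ (Euc d)).symm
        (fderiv ℝ g z ∘L ContinuousLinearMap.inr ℝ (Euc p) (Euc d)) := by
  ext1 z
  simp only [Function.uncurry, gradY, gradient, fderiv_comp_prodMk_right (hg z)]

theorem contDiff_uncurry_gradY {n : WithTop ℕ∞} (hg : ContDiff ℝ (n + 1) g) :
    ContDiff ℝ n (Function.uncurry (gradY g)) := by
  rw [uncurry_gradY_eq (hg.differentiable (by simp))]
  exact (InnerProductSpace.toDual ℝ (Euc d)).symm.contDiff.comp
    ((hg.fderiv_right le_rfl).clm_comp contDiff_const)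

theorem hessYY_eq_fderiv_uncurry_gradY_comp_inr (hg : ContDiff ℝ 2 g) (x : Euc p) (y : Euc d) :
    hessYY g x y =
      fderiv ℝ (Function.uncurry (gradY g)) (x, y) ∘L ContinuousLinearMap.inr ℝ _ _ :=
  fderiv_comp_prodMk_right ((contDiff_uncurry_gradY (n := 1) hg).differentiable one_ne_zero _)

theorem continuous_hessYY (hg : ContDiff ℝ 2 g) :
    Continuous fun z : Euc p × Euc d => hessYY g z.1 z.2 := by
  simp only [hessYY_eq_fderiv_uncurry_gradY_comp_inr hg]
  exact ((contDiff_uncurry_gradY (n := 1) hg).continuous_fderiv one_ne_zero).clm_comp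
    continuous_const

theorem isClosed_augCrit (hg : ContDiff ℝ 2 g) : IsClosed (augCrit g) :=
  isClosed_singleton.preimage (contDiff_uncurry_gradY (n := 1) hg).continuous

theorem IsParamMorseBott.eventually_finrank_ker_hessYY_le (hg : ContDiff ℝ 2 g)
    (hmb : IsParamMorseBott g) {z : Euc p × Euc d} (hz : z ∈ augCrit g) :
    ∀ᶠ z' in 𝓝 z, z' ∈ augCrit g →
      Module.finrank ℝ (LinearMap.ker (hessYY g z.1 z.2 : Euc d →ₗ[ℝ] Euc d)) ≤
        Module.finrank ℝ (LinearMap.ker (hessYY g z'.1 z'.2 : Euc d →ₗ[ℝ] Euc d)) := by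
  obtain ⟨V, hV, hzV, -, hsub⟩ := hmb z hz
  obtain ⟨W, U, V', ψ, ψinv, hW, hU, hzU, hV', hψ, hψinv, hli, hri, himgU, himg⟩ :=
    hsub z ⟨hz, hzV⟩
  filter_upwards [hU.mem_nhds hzU, hV.mem_nhds hzV] with z' hz'U hz'V hz'
  have hψz' : ψ z' ∈ V' := himgU ▸ mem_image_of_mem ψ hz'U
  have hchart := finrank_le_finrank_ker_fderiv_of_chart (G := Function.uncurry (gradY g))
    inter_subset_left hV' hli hri himg ⟨hz'U, hz', hz'V⟩
    ((hψ.differentiableOn two_ne_zero).differentiableAt (hU.mem_nhds hz'U))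
    ((hψinv.differentiableOn two_ne_zero).differentiableAt (hV'.mem_nhds hψz'))
    ((contDiff_uncurry_gradY (n := 1) hg).differentiable one_ne_zero z')
  have hprod := LinearMap.finrank_ker_le_add_finrank_ker_comp_inr
    (fderiv ℝ (Function.uncurry (gradY g)) z' : Euc p × Euc d →ₗ[ℝ] Euc d)
  rw [hW] at hchart
  rw [show Module.finrank ℝ (Euc p) = p from finrank_euclideanSpace_fin] at hprod
  rw [hessYY_eq_fderiv_uncurry_gradY_comp_inr hg z'.1 z'.2]
  exact Nat.le_of_add_le_add_left (hchart.trans hprod)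

end CriticalSet

section FlowSelection

variable {g : Euc p × Euc d → ℝ}

theorem IsParamMorseBott.exists_pos_eventually_mul_norm_le_one (hg : ContDiff ℝ 2 g)
    (hmb : IsParamMorseBott g) (z : Euc p × Euc d) :
    ∃ c > 0, ∀ᶠ z' in 𝓝 z, z' ∈ augCrit g → ∀ B : Euc d →L[ℝ] Euc d,
      IsMPInv (hessYY g z'.1 z'.2) B → c * ‖B‖ ≤ 1 := by
  by_cases hz : z ∈ augCrit g
  · obtain ⟨c, hc, hbound⟩ :=
      (hessYY g z.1 z.2).eventually_mul_norm_le_norm_apply_of_finrank_ker_le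
    refine ⟨c, hc, ?_⟩
    filter_upwards [(continuous_hessYY hg).continuousAt.tendsto.eventually hbound,
      hmb.eventually_finrank_ker_hessYY_le hg hz] with z' hz'bound hrank hz' B hB
    exact hB.mul_norm_le_one hc (hz'bound (hrank hz'))
  · exact ⟨1, one_pos, Filter.mem_of_superset ((isClosed_augCrit hg).isOpen_compl.mem_nhds hz)
      fun z' hz' hcrit => absurd hcrit hz'⟩

variable {φflow : ℝ → Euc p → Euc d → Euc d} {φsel : Euc p → Euc d → Euc d}

theorem IsFlowSelection.mem_augCrit (hg : ContDiff ℝ 2 g) (hφ : IsFlowSelection g φflow φsel)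
    (x : Euc p) (y : Euc d) : (x, φsel x y) ∈ augCrit g := by
  have hF : Continuous fun u => -gradY g x u :=
    ((contDiff_uncurry_gradY (n := 1) hg).continuous.comp (Continuous.prodMk_right x)).neg
  have hder : ∀ᶠ t in atTop, HasDerivAt (φflow · x y) (-gradY g x (φflow t x y)) t :=
    (eventually_gt_atTop 0).mono fun t ht => (hφ.1.2 x y t ht.le).hasDerivAt (Ici_mem_nhds ht)
  exact neg_eq_zero.1 (eq_zero_of_tendsto_of_hasDerivAt (F := fun u => -gradY g x u)
    hF.continuousAt hder (hφ.2 x y))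

theorem IsFlowSelection.exists_eventually_norm_le (hg : ContDiff ℝ 1 g) (hco : CoerciveInY g)
    (hφ : IsFlowSelection g φflow φsel) (x₀ : Euc p) (y : Euc d) :
    ∃ R, ∀ᶠ x in 𝓝 x₀, ‖φsel x y‖ ≤ R := by
  obtain ⟨R, hR⟩ := exists_eventually_norm_lt_of_sublevel hg.continuous (hco x₀) y
  refine ⟨R, hR.mono fun x hx => ?_⟩
  have hder := hφ.1.2 x y
  have hdecr := antitoneOn_comp_of_hasDerivWithinAt_neg_gradient (f := fun y' => g (x, y'))
    (hg.differentiable one_ne_zero |>.comp (by fun_prop)) hder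
  have hbound := hx (φflow · x y) (fun t ht => (hder t ht).continuousWithinAt) (hφ.1.1 x y)
    fun t ht => by simpa [hφ.1.1 x y] using hdecr self_mem_Ici ht ht
  exact le_of_tendsto (hφ.2 x y).norm
    ((eventually_ge_atTop 0).mono fun t ht => (hbound t ht).le)

end FlowSelection

theorem bounded_pseudoinverse_of_limiting_hessian_general
    {p d : ℕ} (g : Euc p × Euc d → ℝ)
    (hg : ContDiff ℝ 3 g) (hmb : IsParamMorseBott g)
    (hco : CoerciveInY g)
    (φflow : ℝ → Euc p → Euc d → Euc d) (φsel : Euc p → Euc d → Euc d)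
    (hφ : IsFlowSelection g φflow φsel)
    (x₀ : Euc p) (y : Euc d) :
    ∃ (U : Set (Euc p)) (lam : ℝ), IsOpen U ∧ x₀ ∈ U ∧ 0 < lam ∧
      ∀ x ∈ U, ∀ Adag : Euc d →L[ℝ] Euc d,
        IsMPInv (hessYY g x (φsel x y)) Adag → lam * ‖Adag‖ ≤ 1 := by
  have hg2 : ContDiff ℝ 2 g := hg.of_le (by norm_num)
  obtain ⟨R, hR⟩ := hφ.exists_eventually_norm_le (hg.of_le (by norm_num)) hco x₀ y
  obtain ⟨c, hc, hbound⟩ := (isCompact_closedBall (0 : Euc d) R).exists_pos_eventually_forall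
    (x₀ := x₀) (P := fun c z => z ∈ augCrit g → ∀ B : Euc d →L[ℝ] Euc d,
      IsMPInv (hessYY g z.1 z.2) B → c * ‖B‖ ≤ 1)
    (fun z c c' hcc' h hz B hB => (mul_le_mul_of_nonneg_right hcc' (norm_nonneg B)).trans
      (h hz B hB))
    fun y' _ => hmb.exists_pos_eventually_mul_norm_le_one hg2 (x₀, y')
  obtain ⟨U, hU, hUopen, hx₀U⟩ := _root_.eventually_nhds_iff.1 (hR.and hbound)
  exact ⟨U, c, hUopen, hx₀U, hc, fun x hx => (hU x hx).2 (φsel x y)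
    (mem_closedBall_zero_iff.2 (hU x hx).1) (hφ.mem_augCrit hg2 x y)⟩

/-- Uniformly bounded pseudo-inverse of the limiting Hessian. -/
theorem bounded_pseudoinverse_of_limiting_hessian
    {p d : ℕ} (g : Euc p × Euc d → ℝ)
    (hg : ContDiff ℝ 3 g) (hmb : IsParamMorseBott g)
    (hsm : SmoothInY g) (hco : CoerciveInY g)
    (φflow : ℝ → Euc p → Euc d → Euc d) (φsel : Euc p → Euc d → Euc d)
    (hφ : IsFlowSelection g φflow φsel)
    (x₀ : Euc p) (y : Euc d)
    (hmin : IsLocalMin (fun y' => g (x₀, y')) (φsel x₀ y)) :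
    ∃ (U : Set (Euc p)) (lam : ℝ), IsOpen U ∧ x₀ ∈ U ∧ 0 < lam ∧
      ∀ x ∈ U, ∀ Adag : Euc d →L[ℝ] Euc d,
        IsMPInv (hessYY g x (φsel x y)) Adag → lam * ‖Adag‖ ≤ 1 :=
  bounded_pseudoinverse_of_limiting_hessian_general g hg hmb hco φflow φsel hφ x₀ y
end
end

section
/- Fixed points of preconditioned gradient descent compositions are critical points: Let g : ℝ^p × ℝ^d → ℝ be twice continuously differentiable with y ↦ ∂_y g(x,y) L-Lipschitz for every x. Define recursively φ_{T+1}(x,y) = φ_T(x,y) − H_T(x,y)·∂_y g(x, φ_T(x,y)) with φ_0(x,y) = y, and I_{M+1}(x,y) = I_M(x,y) − H'_M(x,y)·∂_y g(x, I_M(x,y)) with I_0(x,y) = y, where each H_T(x,y) and H'_M(x,y) is a symmetric positive-definite matrix satisfying H_T(x,y) ⪯ (1/L)I and H'_M(x,y) ⪯ (1/L)I for all (x,y). Let T, M be non-negative integers with T + M > 0 and suppose (x,y) ∈ ℝ^p × ℝ^d satisfies φ_T(x, I_M(x,y)) = y. Then ∂_y g(x,y) = 0. -/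
noncomputable section

open Set Filter Topology Metric RealInnerProductSpace

variable {p d : ℕ}

/-!
Along a preconditioned gradient step `y ↦ y - A ∇f(y)` with `0 ⪯ A ⪯ (1/L) I` and `∇f`
`L`-Lipschitz, the descent lemma gives `f(y - A ∇f(y)) ≤ f(y) - ½ ⟪∇f(y), A ∇f(y)⟫`, so
`g(x, ·)` never increases along either unrolled descent, and it strictly decreases at the first
step if `A ≻ 0` and `∂_y g(x, y) ≠ 0`. Since `T + M > 0`, the composed map `φ_T(x, I_M(x, ·))`
performs at least one step starting at `y`, so a fixed point `y` would satisfy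
`g(x, y) < g(x, y)` unless `∂_y g(x, y) = 0`.
-/

section PreconditionedDescent

variable {E : Type*} [NormedAddCommGroup E] [InnerProductSpace ℝ E]

theorem ContinuousLinearMap.IsPositive.norm_apply_sq_le {A : E →L[ℝ] E} (hA : A.IsPositive)
    {c : ℝ} (hc : ∀ w, ⟪w, A w⟫ ≤ c * ‖w‖ ^ 2) (u : E) : ‖A u‖ ^ 2 ≤ c * ⟪u, A u⟫ := by
  have hAA : ⟪u, A (A u)⟫ = ‖A u‖ ^ 2 := by
    rw [← hA.inner_left_eq_inner_right, real_inner_self_eq_norm_sq]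
  -- Cauchy–Schwarz for the semi-inner product `⟪·, A ·⟫`
  have hCS : ⟪u, A (A u)⟫ * ⟪A u, A u⟫ ≤ ⟪u, A u⟫ * ⟪A u, A (A u)⟫ :=
    LinearMap.BilinForm.apply_mul_apply_le_of_forall_zero_le ((innerₗ E).compl₂ (A : E →ₗ[ℝ] E))
      hA.inner_nonneg_right u (A u)
  rw [hAA, real_inner_self_eq_norm_sq] at hCS
  rcases eq_or_ne (A u) 0 with hAu | hAu
  · simp [hAu]
  · have hpos : 0 < ‖A u‖ ^ 2 := by positivity
    nlinarith [hc (A u), hA.inner_nonneg_right u]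

variable [CompleteSpace E]

theorem ContinuousLinearMap.isPositive_of_adjoint_eq_of_inner_pos {A : E →L[ℝ] E}
    (hsymm : ContinuousLinearMap.adjoint A = A) (hpos : ∀ w, w ≠ 0 → 0 < ⟪w, A w⟫) :
    A.IsPositive := by
  refine (isPositive_iff' A).2 ⟨hsymm, fun w => ?_⟩
  rcases eq_or_ne w 0 with rfl | hw
  · simp
  · rw [real_inner_comm]
    exact (hpos w hw).le

variable {f : E → ℝ} {f' : E → E}

theorem le_add_inner_add_of_lipschitzWith_gradient (hf : ∀ y, HasGradientAt f (f' y) y)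
    {K : NNReal} (hK : LipschitzWith K f') (y h : E) :
    f (y + h) ≤ f y + ⟪f' y, h⟫ + K / 2 * ‖h‖ ^ 2 := by
  set G : ℝ → ℝ := fun t => f (y + t • h) - t * ⟪f' y, h⟫ - K / 2 * ‖h‖ ^ 2 * t ^ 2
  have hG : ∀ t, HasDerivAt G (⟪f' (y + t • h) - f' y, h⟫ - K * ‖h‖ ^ 2 * t) t := by
    intro t
    have hline : HasDerivAt (fun s : ℝ => y + s • h) h t := by
      simpa using ((hasDerivAt_id t).smul_const h).const_add y
    have hf_line : HasDerivAt (fun s => f (y + s • h)) ⟪f' (y + t • h), h⟫ t := by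
      simpa [Function.comp_def] using (hf _).hasFDerivAt.comp_hasDerivAt t hline
    refine ((hf_line.sub ((hasDerivAt_id t).mul_const ⟪f' y, h⟫)).sub
      ((hasDerivAt_pow 2 t).const_mul (K / 2 * ‖h‖ ^ 2))).congr_deriv ?_
    rw [inner_sub_left]
    ring
  have hf'_increment : ∀ t, 0 ≤ t → ⟪f' (y + t • h) - f' y, h⟫ ≤ K * ‖h‖ ^ 2 * t := by
    intro t ht
    calc ⟪f' (y + t • h) - f' y, h⟫ ≤ ‖f' (y + t • h) - f' y‖ * ‖h‖ := real_inner_le_norm _ _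
      _ ≤ K * ‖t • h‖ * ‖h‖ := by
          gcongr
          simpa [dist_eq_norm] using hK.dist_le_mul (y + t • h) y
      _ = K * ‖h‖ ^ 2 * t := by rw [norm_smul, Real.norm_of_nonneg ht]; ring
  have hanti : AntitoneOn G (Icc 0 1) :=
    antitoneOn_of_hasDerivWithinAt_nonpos (convex_Icc 0 1)
      (fun t _ => (hG t).continuousAt.continuousWithinAt) (fun t _ => (hG t).hasDerivWithinAt)
      (fun t ht => by rw [interior_Icc] at ht; linarith [hf'_increment t ht.1.le])
  have h01 := hanti (left_mem_Icc.2 zero_le_one) (right_mem_Icc.2 zero_le_one) zero_le_one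
  norm_num [G] at h01
  linarith

theorem preconditioned_gradient_step_le (hf : ∀ y, HasGradientAt f (f' y) y) {L : ℝ}
    (hL : 0 < L) (hf' : LipschitzWith (Real.toNNReal L) f') {A : E →L[ℝ] E} (hA : A.IsPositive)
    (hAL : ∀ w, ⟪w, A w⟫ ≤ 1 / L * ‖w‖ ^ 2) (y : E) :
    f (y - A (f' y)) ≤ f y - 1 / 2 * ⟪f' y, A (f' y)⟫ := by
  have hdesc := le_add_inner_add_of_lipschitzWith_gradient hf hf' y (-A (f' y))
  rw [Real.coe_toNNReal L hL.le, inner_neg_right, norm_neg, ← sub_eq_add_neg] at hdesc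
  have hstep := mul_le_mul_of_nonneg_left (hA.norm_apply_sq_le hAL (f' y)) hL.le
  rw [← mul_assoc, mul_one_div_cancel hL.ne', one_mul] at hstep
  linarith

variable {L : ℝ} {A : ℕ → E →L[ℝ] E} {z : ℕ → E}

theorem antitone_preconditioned_iterates (hf : ∀ y, HasGradientAt f (f' y) y)
    (hL : 0 < L) (hf' : LipschitzWith (Real.toNNReal L) f') (hA : ∀ n, (A n).IsPositive)
    (hAL : ∀ n w, ⟪w, A n w⟫ ≤ 1 / L * ‖w‖ ^ 2) (hz : ∀ n, z (n + 1) = z n - A n (f' (z n))) :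
    Antitone fun n => f (z n) :=
  antitone_nat_of_succ_le fun n => by
    rw [hz]
    linarith [preconditioned_gradient_step_le hf hL hf' (hA n) (hAL n) (z n),
      (hA n).inner_nonneg_right (f' (z n))]

theorem lt_of_preconditioned_iterates (hf : ∀ y, HasGradientAt f (f' y) y)
    (hL : 0 < L) (hf' : LipschitzWith (Real.toNNReal L) f') (hA : ∀ n, (A n).IsPositive)
    (hAL : ∀ n w, ⟪w, A n w⟫ ≤ 1 / L * ‖w‖ ^ 2) (hz : ∀ n, z (n + 1) = z n - A n (f' (z n)))
    (hpos : 0 < ⟪f' (z 0), A 0 (f' (z 0))⟫) {n : ℕ} (hn : 0 < n) : f (z n) < f (z 0) := by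
  have hfirst := preconditioned_gradient_step_le hf hL hf' (hA 0) (hAL 0) (z 0)
  rw [← hz 0] at hfirst
  have hrest : f (z n) ≤ f (z 1) := antitone_preconditioned_iterates hf hL hf' hA hAL hz hn
  linarith

end PreconditionedDescent

theorem hasGradientAt_gradY {g : Euc p × Euc d → ℝ} (hg : Differentiable ℝ g)
    (x : Euc p) (y : Euc d) : HasGradientAt (fun y' => g (x, y')) (gradY g x y) y :=
  (hg.comp ((differentiable_const x).prodMk differentiable_id)).differentiableAt.hasGradientAt

/-- Fixed points of preconditioned gradient descent compositions
are critical points. -/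
theorem fixed_point_of_unrolled_descent_is_critical
    {p d : ℕ} (g : Euc p × Euc d → ℝ) (hg : ContDiff ℝ 2 g)
    (L : ℝ) (hL : 0 < L)
    (hLip : ∀ x : Euc p, LipschitzWith (Real.toNNReal L) (fun y => gradY g x y))
    (H H' : ℕ → Euc p → Euc d → (Euc d →L[ℝ] Euc d))
    (hHsym : ∀ T x y, ContinuousLinearMap.adjoint (H T x y) = H T x y)
    (hH'sym : ∀ M x y, ContinuousLinearMap.adjoint (H' M x y) = H' M x y)
    (hHpos : ∀ T x y, ∀ w : Euc d, w ≠ 0 → 0 < ⟪w, H T x y w⟫)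
    (hH'pos : ∀ M x y, ∀ w : Euc d, w ≠ 0 → 0 < ⟪w, H' M x y w⟫)
    (hHle : ∀ T x y, ∀ w : Euc d, ⟪w, H T x y w⟫ ≤ (1 / L) * ‖w‖ ^ 2)
    (hH'le : ∀ M x y, ∀ w : Euc d, ⟪w, H' M x y w⟫ ≤ (1 / L) * ‖w‖ ^ 2)
    (φ I : ℕ → Euc p → Euc d → Euc d)
    (hφ0 : ∀ x y, φ 0 x y = y)
    (hφS : ∀ T x y, φ (T + 1) x y = φ T x y - H T x y (gradY g x (φ T x y)))
    (hI0 : ∀ x y, I 0 x y = y)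
    (hIS : ∀ M x y, I (M + 1) x y = I M x y - H' M x y (gradY g x (I M x y)))
    (T M : ℕ) (hTM : 0 < T + M)
    (x : Euc p) (y : Euc d) (hfix : φ T x (I M x y) = y) :
    gradY g x y = 0 := by
  have hgrad := hasGradientAt_gradY (hg.differentiable (by norm_num)) x
  have hH := fun n w => ContinuousLinearMap.isPositive_of_adjoint_eq_of_inner_pos
    (hHsym n x w) (hHpos n x w)
  have hH' := fun n => ContinuousLinearMap.isPositive_of_adjoint_eq_of_inner_pos
    (hH'sym n x y) (hH'pos n x y)
  by_contra hne
  have hφ_le : g (x, φ T x (I M x y)) ≤ g (x, I M x y) := by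
    simpa only [hφ0] using antitone_preconditioned_iterates (z := fun n => φ n x (I M x y))
      hgrad hL (hLip x) (hH · _) (hHle · x _) (hφS · x _) (Nat.zero_le T)
  rcases Nat.eq_zero_or_pos M with rfl | hM
  · have hφ_lt := lt_of_preconditioned_iterates (z := fun n => φ n x y) hgrad hL (hLip x)
      (hH · y) (hHle · x y) (hφS · x y) (by simpa [hφ0] using hHpos 0 x y _ hne)
      (by omega : 0 < T)
    rw [hI0] at hfix
    simp only [hfix, hφ0] at hφ_lt
    exact hφ_lt.false
  · have hI_lt := lt_of_preconditioned_iterates (z := fun n => I n x y) hgrad hL (hLip x) hH'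
      (hH'le · x y) (hIS · x y) (by simpa [hI0] using hH'pos 0 x y _ hne) hM
    rw [hfix] at hφ_le
    rw [hI0] at hI_lt
    exact (hφ_le.trans_lt hI_lt).false

end
end
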